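/- arXiv:2204.01685 — 4 statements merged into one kernel-verified Lean document; each statement's English description precedes it below -/
import Mathlib

section
/- If X is a positive semidefinite matrix on the tensor product of two finite-dimensional Hilbert spaces A ⊗ B and X has positive partial transpose (i.e., (id ⊗ transpose)(X) is positive semidefinite), then rank(X) ≥ rank(Tr_A X) and rank(X) ≥ rank(Tr_B X). -/
open Matrix Kronecker BigOperators ComplexOrder

noncomputable section

/-- Partial trace over the first tensor factor. -/
def trFst {m p : Type*} [Fintype m] (X : Matrix (m × p) (m × p) ℂ) : Matrix p p ℂ :=
  fun i j => ∑ a, X (a, i) (a, j)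

/-- Partial trace over the second tensor factor. -/
def trSnd {m p : Type*} [Fintype p] (X : Matrix (m × p) (m × p) ℂ) : Matrix m m ℂ :=
  fun i j => ∑ b, X (i, b) (j, b)

/-- Partial transpose on the second tensor factor. -/
def ptSnd {m p : Type*} (X : Matrix (m × p) (m × p) ℂ) : Matrix (m × p) (m × p) ℂ :=
  fun q r => X (q.1, r.2) (r.1, q.2)

/-- A bipartite matrix is separable if it is a finite sum of Kronecker products of
positive semidefinite matrices (equivalently, lies in the convex hull of such products). -/
def Separable {m p : Type*} [Fintype m] [Fintype p] (X : Matrix (m × p) (m × p) ℂ) : Prop :=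
  ∃ (k : ℕ) (Y : Fin k → Matrix m m ℂ) (Z : Fin k → Matrix p p ℂ),
    (∀ i, (Y i).PosSemidef) ∧ (∀ i, (Z i).PosSemidef) ∧ X = ∑ i, (Y i) ⊗ₖ (Z i)

/-- The amplification `id_m ⊗ Φ` of a map `Φ`, acting blockwise. -/
def amp {dA dB : ℕ} {m : Type*}
    (Φ : Matrix (Fin dA) (Fin dA) ℂ →ₗ[ℂ] Matrix (Fin dB) (Fin dB) ℂ)
    (X : Matrix (m × Fin dA) (m × Fin dA) ℂ) : Matrix (m × Fin dB) (m × Fin dB) ℂ :=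
  fun q r => Φ (fun a a' => X (q.1, a) (r.1, a')) q.2 r.2

/-- The amplification `ϑ_m ⊗ Φ` of a map `Φ` (transpose on the first factor). -/
def ampT {dA dB : ℕ} {m : Type*}
    (Φ : Matrix (Fin dA) (Fin dA) ℂ →ₗ[ℂ] Matrix (Fin dB) (Fin dB) ℂ)
    (X : Matrix (m × Fin dA) (m × Fin dA) ℂ) : Matrix (m × Fin dB) (m × Fin dB) ℂ :=
  fun q r => Φ (fun a a' => X (r.1, a) (q.1, a')) q.2 r.2

/-- Complete positivity. -/
def IsCP {dA dB : ℕ} (Φ : Matrix (Fin dA) (Fin dA) ℂ →ₗ[ℂ] Matrix (Fin dB) (Fin dB) ℂ) : Prop :=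
  ∀ (n : ℕ) (X : Matrix (Fin n × Fin dA) (Fin n × Fin dA) ℂ),
    X.PosSemidef → (amp Φ X).PosSemidef

/-- Complete copositivity. -/
def IsCoCP {dA dB : ℕ} (Φ : Matrix (Fin dA) (Fin dA) ℂ →ₗ[ℂ] Matrix (Fin dB) (Fin dB) ℂ) : Prop :=
  ∀ (n : ℕ) (X : Matrix (Fin n × Fin dA) (Fin n × Fin dA) ℂ),
    X.PosSemidef → (ampT Φ X).PosSemidef

/-- A map is PPT if it is completely positive and completely copositive. -/
def IsPPT {dA dB : ℕ} (Φ : Matrix (Fin dA) (Fin dA) ℂ →ₗ[ℂ] Matrix (Fin dB) (Fin dB) ℂ) : Prop :=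
  IsCP Φ ∧ IsCoCP Φ

/-- Entanglement breaking maps. -/
def IsEB {dA dB : ℕ} (Φ : Matrix (Fin dA) (Fin dA) ℂ →ₗ[ℂ] Matrix (Fin dB) (Fin dB) ℂ) : Prop :=
  ∀ (n : ℕ) (X : Matrix (Fin n × Fin dA) (Fin n × Fin dA) ℂ),
    X.PosSemidef → Separable (amp Φ X)

/-- The Choi matrix of a linear map. -/
def Choi {dA dB : ℕ} (Φ : Matrix (Fin dA) (Fin dA) ℂ →ₗ[ℂ] Matrix (Fin dB) (Fin dB) ℂ) :
    Matrix (Fin dA × Fin dB) (Fin dA × Fin dB) ℂ :=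
  ∑ i, ∑ j, (single i j (1 : ℂ)) ⊗ₖ Φ (single i j (1 : ℂ))


/-!
Write `X_{xa}` for the blocks of `X` and `V_a` for the span of the columns of `X` with first
index `a`; projecting `V_a` onto the `x`-th block row gives `ran X_{xa}`. In a positive
semidefinite matrix the range of a block lies in the range of the diagonal block in its row;
applied to the partial transpose on the first factor, whose `(a, x)` block is `X_{xa}`, this gives
`ran X_{xa} ⊆ ran X_{aa}`. A dimension count, adding one block at a time, then shows
`dim ∑_a ran X_{aa} ≤ dim ∑_a V_a = rank X`, while `ran Tr_A X ⊆ ∑_a ran X_{aa}`.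
Swapping the factors gives the bound for `Tr_B X`.
-/

open Module

namespace Submodule

variable {K M N : Type*} [Field K] [AddCommGroup M] [Module K M] [AddCommGroup N] [Module K N]
  [FiniteDimensional K M]

theorem finrank_map_add_finrank_inf_ker (g : M →ₗ[K] N) (p : Submodule K M) :
    finrank K (p.map g) + finrank K ↥(p ⊓ LinearMap.ker g) = finrank K p := by
  have := LinearMap.finrank_range_add_finrank_ker (g.domRestrict p)
  rwa [LinearMap.range_domRestrict, LinearMap.ker_domRestrict, ← finrank_map_subtype_eq,
    map_comap_subtype] at this

theorem finrank_map_add_finrank_le_of_le (g : M →ₗ[K] N) {F W : Submodule K M} (hFW : F ≤ W) :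
    finrank K (W.map g) + finrank K F ≤ finrank K W + finrank K (F.map g) := by
  have hW := finrank_map_add_finrank_inf_ker g W
  have hF := finrank_map_add_finrank_inf_ker g F
  have hker := finrank_mono (inf_le_inf_right (LinearMap.ker g) hFW)
  omega

theorem finrank_finsetSup_map_le {ι : Type*} (V : ι → Submodule K M)
    (π : ι → M →ₗ[K] N) (hπ : ∀ x a, (V a).map (π x) ≤ (V a).map (π a)) (s : Finset ι) :
    finrank K ↥(s.sup fun a => (V a).map (π a)) ≤ finrank K ↥(s.sup V) := by
  classical
  induction s using Finset.induction_on with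
  | empty => rw [Finset.sup_empty, finrank_bot]; exact Nat.zero_le _
  | @insert j s _ ih =>
    rw [Finset.sup_insert, Finset.sup_insert]
    set S := s.sup fun a => (V a).map (π a)
    set F := s.sup V
    have hFS : F.map (π j) ≤ S := by
      rw [map_le_iff_le_comap]
      refine Finset.sup_le fun a ha => ?_
      rw [← map_le_iff_le_comap]
      exact (hπ j a).trans (Finset.le_sup (f := fun a => (V a).map (π a)) ha)
    have hsup : (V j).map (π j) ⊔ S = (V j ⊔ F).map (π j) ⊔ S := by
      rw [map_sup, sup_assoc, sup_eq_right.mpr hFS]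
    rw [hsup]
    have hF : F ≤ V j ⊔ F := le_sup_right
    have hsup_inf := finrank_sup_add_finrank_inf_eq ((V j ⊔ F).map (π j)) S
    have hinf := finrank_mono (le_inf (map_mono hF) hFS)
    have hmap := finrank_map_add_finrank_le_of_le (π j) hF
    omega

end Submodule

namespace Matrix

variable {𝕜 : Type*} [RCLike 𝕜] {l m n : Type*} [Fintype m] [Fintype n]

theorem range_mulVecLin_submatrix_id_le (A : Matrix l m 𝕜) (g : n → m) :
    LinearMap.range (A.submatrix id g).mulVecLin ≤ LinearMap.range A.mulVecLin := by
  rw [range_mulVecLin, range_mulVecLin]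
  exact Submodule.span_mono (Set.range_comp_subset_range g A.col)

theorem range_mulVecLin_conjTranspose_mul_self [Fintype l] (A : Matrix l m 𝕜) :
    LinearMap.range (Aᴴ * A).mulVecLin = LinearMap.range Aᴴ.mulVecLin := by
  refine Submodule.eq_of_le_of_finrank_le ?_ ?_
  · rw [mulVecLin_mul]
    exact LinearMap.range_comp_le_range _ _
  · change Aᴴ.rank ≤ (Aᴴ * A).rank
    rw [rank_conjTranspose_mul_self, rank_conjTranspose]

theorem range_mulVecLin_conjTranspose_mul_le [Fintype l] (A : Matrix l m 𝕜) (B : Matrix l n 𝕜) :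
    LinearMap.range (Aᴴ * B).mulVecLin ≤ LinearMap.range (Aᴴ * A).mulVecLin := by
  rw [range_mulVecLin_conjTranspose_mul_self, mulVecLin_mul]
  exact LinearMap.range_comp_le_range _ _

theorem PosSemidef.range_mulVecLin_submatrix_le [Fintype l] {X : Matrix n n 𝕜}
    (hX : X.PosSemidef) (f : l → n) (g : m → n) :
    LinearMap.range (X.submatrix f g).mulVecLin ≤ LinearMap.range (X.submatrix f f).mulVecLin := by
  obtain ⟨B, rfl⟩ : ∃ B : Matrix n n 𝕜, X = Bᴴ * B := by
    classical
    open scoped MatrixOrder in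
    exact CStarAlgebra.nonneg_iff_eq_star_mul_self.mp hX.nonneg
  rw [submatrix_mul _ _ f id g Function.bijective_id,
    submatrix_mul _ _ f id f Function.bijective_id, ← conjTranspose_submatrix]
  exact range_mulVecLin_conjTranspose_mul_le _ _

end Matrix

section Bipartite

variable {m p : Type*} [Fintype m]

theorem trFst_eq_sum_submatrix (X : Matrix (m × p) (m × p) ℂ) :
    trFst X = ∑ a, X.submatrix (Prod.mk a) (Prod.mk a) := by
  ext i j
  simp [trFst, Matrix.sum_apply]

theorem range_mulVecLin_trFst_le [Fintype p] (X : Matrix (m × p) (m × p) ℂ) :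
    LinearMap.range (trFst X).mulVecLin ≤
      Finset.univ.sup fun a => LinearMap.range (X.submatrix (Prod.mk a) (Prod.mk a)).mulVecLin := by
  rintro _ ⟨w, rfl⟩
  rw [Matrix.mulVecLin_apply, trFst_eq_sum_submatrix, Matrix.sum_mulVec]
  exact Submodule.sum_mem _ fun a ha =>
    Finset.le_sup (f := fun a => LinearMap.range (X.submatrix (Prod.mk a) (Prod.mk a)).mulVecLin)
      ha ⟨w, rfl⟩

theorem range_mulVecLin_block_le_of_posSemidef_ptSnd [Fintype p] {X : Matrix (m × p) (m × p) ℂ}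
    (hX : (ptSnd X).PosSemidef) (x a : m) :
    LinearMap.range (X.submatrix (Prod.mk x) (Prod.mk a)).mulVecLin ≤
      LinearMap.range (X.submatrix (Prod.mk a) (Prod.mk a)).mulVecLin :=
  hX.transpose.range_mulVecLin_submatrix_le (Prod.mk a) (Prod.mk x)

theorem rank_trFst_le_rank [Fintype p] (X : Matrix (m × p) (m × p) ℂ)
    (hX : (ptSnd X).PosSemidef) : (trFst X).rank ≤ X.rank := by
  set V : m → Submodule ℂ (m × p → ℂ) := fun a =>
    LinearMap.range (X.submatrix id (Prod.mk a)).mulVecLin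
  set π : m → (m × p → ℂ) →ₗ[ℂ] (p → ℂ) := fun x => LinearMap.funLeft ℂ ℂ (Prod.mk x)
  have hVπ : ∀ x a, (V a).map (π x) =
      LinearMap.range (X.submatrix (Prod.mk x) (Prod.mk a)).mulVecLin := fun x a => by
    rw [← LinearMap.range_comp]
    rfl
  calc (trFst X).rank
      ≤ finrank ℂ ↥(Finset.univ.sup fun a => (V a).map (π a)) := by
        rw [Finset.sup_congr rfl fun a _ => hVπ a a]
        exact Submodule.finrank_mono (range_mulVecLin_trFst_le X)
    _ ≤ finrank ℂ ↥(Finset.univ.sup V) := by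
        refine Submodule.finrank_finsetSup_map_le V π (fun x a => ?_) _
        rw [hVπ, hVπ]
        exact range_mulVecLin_block_le_of_posSemidef_ptSnd hX x a
    _ ≤ X.rank :=
        Submodule.finrank_mono (Finset.sup_le fun a _ => X.range_mulVecLin_submatrix_id_le _)

theorem rank_trSnd_le_rank [Fintype p] (X : Matrix (m × p) (m × p) ℂ)
    (hX : (ptSnd X).PosSemidef) : (trSnd X).rank ≤ X.rank := by
  set e := Equiv.prodComm p m
  have hswap : ptSnd (X.submatrix e e) = (ptSnd X)ᵀ.submatrix e e := rfl
  have htr : trFst (X.submatrix e e) = trSnd X := rfl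
  rw [← htr, ← X.rank_submatrix e e]
  exact rank_trFst_le_rank _ (hswap ▸ hX.transpose.submatrix e)

end Bipartite

theorem stmt0_general {dA dB : ℕ} (X : Matrix (Fin dA × Fin dB) (Fin dA × Fin dB) ℂ)
    (hPPT : (ptSnd X).PosSemidef) :
    (trFst X).rank ≤ X.rank ∧ (trSnd X).rank ≤ X.rank :=
  ⟨rank_trFst_le_rank X hPPT, rank_trSnd_le_rank X hPPT⟩

theorem stmt0 {dA dB : ℕ} (X : Matrix (Fin dA × Fin dB) (Fin dA × Fin dB) ℂ)
    (hX : X.PosSemidef) (hPPT : (ptSnd X).PosSemidef) :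
    (trFst X).rank ≤ X.rank ∧ (trSnd X).rank ≤ X.rank :=
  stmt0_general X hPPT
end
end

section
/- A linear map Φ : M_{d_A}(ℂ) → M_{d_B}(ℂ) is entanglement breaking if and only if its Choi matrix J(Φ) is separable. -/
open Matrix Kronecker BigOperators ComplexOrder

noncomputable section

/-! Expanding `Φ` in matrix units, `(id ⊗ Φ)(X) = Σ_{a,a'} X_{·a,·a'} ⊗ Φ(E_{aa'})`, so a separable
decomposition `J(Φ) = Σ_i Y_i ⊗ Z_i` turns into `(id ⊗ Φ)(X) = Σ_i Tr₂((1 ⊗ Y_iᵀ) X) ⊗ Z_i`, whose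
first factors are positive semidefinite whenever `X` is. Conversely `J(Φ)` itself is `(id ⊗ Φ)`
applied to the rank-one projection onto the (unnormalized) maximally entangled vector. -/

def contractSnd {m p : Type*} [Fintype p] (Y : Matrix p p ℂ) (X : Matrix (m × p) (m × p) ℂ) :
    Matrix m m ℂ :=
  of fun q r => ∑ a, ∑ a', Y a a' * X (q, a) (r, a')

theorem posSemidef_contractSnd {m p : Type*} [Fintype m] [Fintype p]
    {Y : Matrix p p ℂ} {X : Matrix (m × p) (m × p) ℂ} (hY : Y.PosSemidef) (hX : X.PosSemidef) :
    (contractSnd Y X).PosSemidef := by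
  classical
  let V : Matrix m (m × p) ℂ := of fun q s => if q = s.1 then 1 else 0
  have hJ : (of fun _ _ => 1 : Matrix m m ℂ).PosSemidef := by
    simpa [vecMulVec] using posSemidef_vecMulVec_self_star (fun _ : m => (1 : ℂ))
  have hcontract :
      contractSnd Y X = V * ((of fun _ _ => 1 : Matrix m m ℂ) ⊗ₖ Y ⊙ X) * Vᴴ := by
    ext q r
    simp only [V, contractSnd, of_apply, mul_apply, hadamard_apply, kroneckerMap_apply,
      conjTranspose_apply, Fintype.sum_prod_type, apply_ite star, star_one, star_zero, ite_mul,
      mul_ite, one_mul, zero_mul, mul_one, mul_zero, Finset.sum_ite_irrel, Finset.sum_const_zero,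
      Finset.sum_ite_eq, Finset.mem_univ, if_true]
    exact Finset.sum_comm
  rw [hcontract]
  exact ((hJ.kronecker hY).hadamard hX).mul_mul_conjTranspose_same V

section Choi

variable {dA dB : ℕ} (Φ : Matrix (Fin dA) (Fin dA) ℂ →ₗ[ℂ] Matrix (Fin dB) (Fin dB) ℂ)

theorem choi_apply (a a' : Fin dA) (b b' : Fin dB) :
    Choi Φ (a, b) (a', b') = Φ (single a a' 1) b b' := by
  simp [Choi, Matrix.sum_apply, single, ite_and]

theorem apply_eq_sum_choi (A : Matrix (Fin dA) (Fin dA) ℂ) (b b' : Fin dB) :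
    Φ A b b' = ∑ a, ∑ a', A a a' * Choi Φ (a, b) (a', b') := by
  conv_lhs => rw [matrix_eq_sum_single A]
  have hsingle (i j : Fin dA) : single i j (A i j) = A i j • single i j (1 : ℂ) := by
    rw [smul_single, smul_eq_mul, mul_one]
  simp only [hsingle, map_sum, _root_.map_smul, Matrix.sum_apply, Matrix.smul_apply, smul_eq_mul,
    choi_apply]

theorem amp_eq_sum_kronecker_of_choi_eq {m : Type*} {k : ℕ}
    {Y : Fin k → Matrix (Fin dA) (Fin dA) ℂ} {Z : Fin k → Matrix (Fin dB) (Fin dB) ℂ} (hΦ : Choi Φ = ∑ i, Y i ⊗ₖ Z i)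
    (X : Matrix (m × Fin dA) (m × Fin dA) ℂ) :
    amp Φ X = ∑ i, contractSnd (Y i) X ⊗ₖ Z i := by
  ext ⟨q, b⟩ ⟨r, b'⟩
  refine (apply_eq_sum_choi Φ (of fun a a' => X (q, a) (r, a')) b b').trans ?_
  rw [hΦ]
  simp only [contractSnd, Matrix.sum_apply, kroneckerMap_apply, of_apply, Finset.mul_sum,
    Finset.sum_mul]
  conv_lhs => enter [2, a]; rw [Finset.sum_comm]
  rw [Finset.sum_comm]
  refine Finset.sum_congr rfl fun i _ => Finset.sum_congr rfl fun a _ =>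
    Finset.sum_congr rfl fun a' _ => by ring

def maxEntangledVec (ι : Type*) [DecidableEq ι] : ι × ι → ℂ :=
  fun s => if s.1 = s.2 then 1 else 0

theorem amp_maxEntangled :
    amp Φ (vecMulVec (maxEntangledVec (Fin dA)) (star (maxEntangledVec (Fin dA)))) = Choi Φ := by
  ext ⟨a, b⟩ ⟨a', b'⟩
  rw [choi_apply]
  show Φ (of fun x y => _) b b' = _
  refine congrArg (fun A => Φ A b b') ?_
  ext x y
  simp [maxEntangledVec, single, ← ite_and, and_comm]

end Choi

theorem stmt2 {dA dB : ℕ} (Φ : Matrix (Fin dA) (Fin dA) ℂ →ₗ[ℂ] Matrix (Fin dB) (Fin dB) ℂ) :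
    IsEB Φ ↔ Separable (Choi Φ) := by
  constructor
  · intro hEB
    exact amp_maxEntangled Φ ▸ hEB dA _ (posSemidef_vecMulVec_self_star _)
  · rintro ⟨k, Y, Z, hY, hZ, hΦ⟩ n X hX
    exact ⟨k, fun i => contractSnd (Y i) X, Z, fun i => posSemidef_contractSnd (hY i) hX, hZ,
      amp_eq_sum_kronecker_of_choi_eq Φ hΦ X⟩
end
end

section
/- If X ∈ M_{d_A} ⊗ M_{d_B} is separable, then X has positive partial transpose. -/
open Matrix Kronecker BigOperators ComplexOrder

noncomputable section

section PartialTranspose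

variable {m p : Type*}

theorem ptSnd_sum {ι : Type*} (s : Finset ι) (X : ι → Matrix (m × p) (m × p) ℂ) :
    ptSnd (∑ i ∈ s, X i) = ∑ i ∈ s, ptSnd (X i) := by
  ext q r
  simp only [ptSnd, Matrix.sum_apply]

theorem ptSnd_kronecker (Y : Matrix m m ℂ) (Z : Matrix p p ℂ) :
    ptSnd (Y ⊗ₖ Z) = Y ⊗ₖ Zᵀ := by
  ext q r
  simp only [ptSnd, kroneckerMap_apply, transpose_apply]

theorem Separable.posSemidef_ptSnd [Fintype m] [Fintype p] {X : Matrix (m × p) (m × p) ℂ}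
    (hX : Separable X) : (ptSnd X).PosSemidef := by
  obtain ⟨k, Y, Z, hY, hZ, rfl⟩ := hX
  rw [ptSnd_sum]
  exact posSemidef_sum _ fun i _ => by
    rw [ptSnd_kronecker]
    exact (hY i).kronecker (hZ i).transpose

end PartialTranspose

theorem stmt13 {dA dB : ℕ} (X : Matrix (Fin dA × Fin dB) (Fin dA × Fin dB) ℂ)
    (hX : Separable X) : (ptSnd X).PosSemidef :=
  hX.posSemidef_ptSnd
end
end

section
/- If Φ : M_{d_A} → M_{d_B} is completely positive with Choi matrix J(Φ) positive semidefinite of rank 1, and J(Φ) has positive partial transpose, then J(Φ) is separable (equals a product state up to the rank condition), i.e., Φ is entanglement breaking. -/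
open Matrix Kronecker BigOperators ComplexOrder

noncomputable section

/-! A positive semidefinite matrix of rank one is `v v*`, where we read `v : m × p → ℂ` as the
coefficient matrix `(v (i, j))` of a vector of `ℂ^m ⊗ ℂ^p`. For `b, b' : p`, evaluate the partial
transpose of `v v*` at the vector `x` with `x (i, ·) = v (i, b) e_{b'} - v (i, b') e_b`: the value is
`-∑_{i,k} |B i k|²`, because `B i k = v (i, b) v (k, b') - v (i, b') v (k, b)` is antisymmetric in
`(i, k)`. Positivity of the partial transpose therefore kills every `2 × 2` minor of `v`, so `v` is a
product vector `u ⊗ w` and `v v* = u u* ⊗ w w*`. -/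

namespace Matrix

variable {m n p : Type*}

theorem exists_eq_vecMulVec_of_mul_eq_mul {K : Type*} [Field K] {A : Matrix m n K}
    (h : ∀ i i' j j', A i j * A i' j' = A i j' * A i' j) : ∃ w v, A = vecMulVec w v := by
  by_cases hA : A = 0
  · exact ⟨0, 0, by simp [hA]⟩
  obtain ⟨i₀, j₀, hne⟩ : ∃ i j, A i j ≠ 0 := by
    by_contra! h0
    exact hA (ext h0)
  refine ⟨fun i => A i j₀, fun j => A i₀ j / A i₀ j₀, ext fun i j => ?_⟩
  rw [vecMulVec_apply, mul_div_assoc', eq_div_iff hne]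
  exact h i i₀ j j₀

theorem exists_eq_vecMulVec_of_rank_le_one {K : Type*} [Field K] [Fintype n]
    {A : Matrix m n K} (hA : A.rank ≤ 1) : ∃ w v, A = vecMulVec w v := by
  classical
  obtain ⟨w, hw⟩ := finrank_le_one_iff.mp hA
  choose c hc using fun j => hw ⟨A *ᵥ Pi.single j 1, Pi.single j 1, rfl⟩
  refine ⟨w, c, ext fun i j => ?_⟩
  have := congrFun (congrArg Subtype.val (hc j)) i
  simp only [SetLike.val_smul, Pi.smul_apply, smul_eq_mul, mulVec_single_one] at this
  rw [vecMulVec_apply, mul_comm, this, col_apply]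

theorem PosSemidef.exists_eq_vecMulVec_star_of_rank_le_one [Fintype n] {X : Matrix n n ℂ}
    (hX : X.PosSemidef) (hrank : X.rank ≤ 1) : ∃ v, X = vecMulVec v (star v) := by
  by_cases h0 : X = 0
  · exact ⟨0, by simp [h0]⟩
  obtain ⟨w, c, hwc⟩ := exists_eq_vecMulVec_of_rank_le_one hrank
  obtain ⟨r, -, hr : X r r ≠ 0⟩ :=
    Finset.exists_ne_zero_of_sum_ne_zero (mt hX.trace_eq_zero_iff.mp h0)
  have hpos : 0 < X r r := lt_of_le_of_ne hX.diag_nonneg (Ne.symm hr)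
  set s : ℂ := ((√(X r r).re : ℝ) : ℂ)
  have hs : s * s = X r r := by
    rw [← Complex.ofReal_mul, Real.mul_self_sqrt (Complex.pos_iff.mp hpos).1.le,
      Complex.conj_eq_iff_re.mp (hX.1.apply r r)]
  have hs_real : star s = s := Complex.conj_ofReal _
  refine ⟨fun q => X q r / s, ext fun q q' => ?_⟩
  rw [vecMulVec_apply, Pi.star_apply, star_div₀, hs_real, hX.1.apply, div_mul_div_comm, hs,
    eq_div_iff hr, hwc]
  simp only [vecMulVec_apply]
  ring

theorem kronecker_vecMulVec_vecMulVec {R : Type*} [CommSemiring R] (u u' : m → R)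
    (w w' : p → R) :
    vecMulVec u u' ⊗ₖ vecMulVec w w' =
      vecMulVec (fun q => u q.1 * w q.2) (fun q => u' q.1 * w' q.2) := by
  ext q r
  simp only [kroneckerMap_apply, vecMulVec_apply]
  ring

end Matrix

section PartialTranspose

variable {m p : Type*} [Fintype m] [Fintype p]

theorem star_dotProduct_ptSnd_vecMulVec_mulVec (v x : m × p → ℂ) :
    star x ⬝ᵥ (ptSnd (vecMulVec v (star v)) *ᵥ x) =
      ∑ i, ∑ k, star (∑ j, x (i, j) * v (k, j)) * ∑ l, x (k, l) * v (i, l) := by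
  simp only [dotProduct, mulVec, ptSnd, vecMulVec_apply, Fintype.sum_prod_type, star_sum,
    star_mul', Finset.mul_sum, Finset.sum_mul, Pi.star_apply]
  refine Finset.sum_congr rfl fun i _ => ?_
  rw [Finset.sum_comm]
  refine Finset.sum_congr rfl fun k _ => ?_
  rw [Finset.sum_comm]
  exact Finset.sum_congr rfl fun j _ => Finset.sum_congr rfl fun l _ => by ring

theorem mul_eq_mul_of_posSemidef_ptSnd {v : m × p → ℂ}
    (h : (ptSnd (vecMulVec v (star v))).PosSemidef) (i k : m) (b b' : p) :
    v (i, b) * v (k, b') = v (i, b') * v (k, b) := by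
  classical
  set B : m → m → ℂ := fun i k => v (i, b) * v (k, b') - v (i, b') * v (k, b) with hB
  set x : m × p → ℂ :=
    fun q => (Pi.single b' (v (q.1, b)) - Pi.single b (v (q.1, b')) : p → ℂ) q.2
  have hx : ∀ i k, ∑ j, x (i, j) * v (k, j) = B i k := fun i k => by
    simp [x, sub_mul, Finset.sum_sub_distrib, Pi.single_apply, hB]
  have hq := h.dotProduct_mulVec_nonneg x
  simp only [star_dotProduct_ptSnd_vecMulVec_mulVec, hx] at hq
  have hanti : ∑ i, ∑ k, star (B i k) * B k i = -∑ i, ∑ k, star (B i k) * B i k := by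
    simp only [← Finset.sum_neg_distrib, hB]
    exact Finset.sum_congr rfl fun _ _ => Finset.sum_congr rfl fun _ _ => by ring
  have hnonneg : ∀ i k, 0 ≤ star (B i k) * B i k := fun i k => star_mul_self_nonneg _
  have hsum := le_antisymm (neg_nonneg.mp (hanti ▸ hq))
    (Finset.sum_nonneg fun i _ => Finset.sum_nonneg fun k _ => hnonneg i k)
  rw [Finset.sum_eq_zero_iff_of_nonneg fun i _ => Finset.sum_nonneg fun k _ => hnonneg i k] at hsum
  have hik := (Finset.sum_eq_zero_iff_of_nonneg fun k _ => hnonneg i k).mp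
    (hsum i (Finset.mem_univ _)) k (Finset.mem_univ _)
  exact sub_eq_zero.mp ((CStarRing.star_mul_self_eq_zero_iff _).mp hik)

theorem separable_vecMulVec_star_of_posSemidef_ptSnd {v : m × p → ℂ}
    (h : (ptSnd (vecMulVec v (star v))).PosSemidef) : Separable (vecMulVec v (star v)) := by
  obtain ⟨u, w, huw⟩ := exists_eq_vecMulVec_of_mul_eq_mul (A := of fun i j => v (i, j))
    fun i i' j j' => mul_eq_mul_of_posSemidef_ptSnd h i i' j j'
  have hv : v = fun q => u q.1 * w q.2 := funext fun q => congrFun (congrFun huw q.1) q.2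
  refine ⟨1, fun _ => vecMulVec u (star u), fun _ => vecMulVec w (star w),
    fun _ => posSemidef_vecMulVec_self_star u, fun _ => posSemidef_vecMulVec_self_star w, ?_⟩
  rw [Fin.sum_univ_one, kronecker_vecMulVec_vecMulVec, hv]
  congr 1
  ext q
  exact star_mul' _ _

theorem separable_of_rank_le_one_of_posSemidef_ptSnd {X : Matrix (m × p) (m × p) ℂ}
    (hX : X.PosSemidef) (hrank : X.rank ≤ 1) (hPPT : (ptSnd X).PosSemidef) : Separable X := by
  obtain ⟨v, rfl⟩ := hX.exists_eq_vecMulVec_star_of_rank_le_one hrank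
  exact separable_vecMulVec_star_of_posSemidef_ptSnd hPPT

end PartialTranspose

theorem stmt17_general {dA dB : ℕ} (Φ : Matrix (Fin dA) (Fin dA) ℂ →ₗ[ℂ] Matrix (Fin dB) (Fin dB) ℂ)
    (hpsd : (Choi Φ).PosSemidef) (hrank : (Choi Φ).rank = 1)
    (hPPT : (ptSnd (Choi Φ)).PosSemidef) :
    Separable (Choi Φ) :=
  separable_of_rank_le_one_of_posSemidef_ptSnd hpsd hrank.le hPPT

theorem stmt17 {dA dB : ℕ} (Φ : Matrix (Fin dA) (Fin dA) ℂ →ₗ[ℂ] Matrix (Fin dB) (Fin dB) ℂ)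
    (hCP : IsCP Φ) (hpsd : (Choi Φ).PosSemidef) (hrank : (Choi Φ).rank = 1)
    (hPPT : (ptSnd (Choi Φ)).PosSemidef) :
    Separable (Choi Φ) :=
  stmt17_general Φ hpsd hrank hPPT
end
end
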